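/- arXiv:2510.27528 — 2 statements merged into one kernel-verified Lean document; each statement's English description precedes it below -/
import Mathlib

section
/- CVaR defined by the Rockafellar–Uryasev formula is subadditive: for integrable random variables V and W on the same probability space and α ∈ (0,1), CVaR_α(V + W) ≤ CVaR_α(V) + CVaR_α(W). -/
open MeasureTheory

noncomputable def cvar {Ω : Type*} [MeasurableSpace Ω] (μ : Measure Ω)
    (α : ℝ) (V : Ω → ℝ) : ℝ :=
  ⨅ ζ : ℝ, (ζ + (1 - α)⁻¹ * ∫ ω, max (V ω - ζ) 0 ∂μ)

lemma cvar_aux_int {Ω : Type*} [MeasurableSpace Ω] (μ : Measure Ω) [IsFiniteMeasure μ]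
    {V : Ω → ℝ} (hV : Integrable V μ) (ζ : ℝ) :
    Integrable (fun ω => max (V ω - ζ) 0) μ :=
  (hV.sub (integrable_const ζ)).pos_part

lemma cvar_aux_lb {Ω : Type*} [MeasurableSpace Ω] (μ : Measure Ω)
    [IsProbabilityMeasure μ] {V : Ω → ℝ} (hV : Integrable V μ)
    {c : ℝ} (hc : 1 ≤ c) (ζ : ℝ) :
    ∫ ω, V ω ∂μ ≤ ζ + c * ∫ ω, max (V ω - ζ) 0 ∂μ := by
  have hI0 : 0 ≤ ∫ ω, max (V ω - ζ) 0 ∂μ :=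
    integral_nonneg fun ω => le_max_right _ _
  have h1 : ∫ ω, (V ω - ζ) ∂μ ≤ ∫ ω, max (V ω - ζ) 0 ∂μ :=
    integral_mono (hV.sub (integrable_const ζ)) (cvar_aux_int μ hV ζ)
      fun ω => le_max_left _ _
  have h2 : ∫ ω, (V ω - ζ) ∂μ = (∫ ω, V ω ∂μ) - ζ := by
    rw [integral_sub hV (integrable_const ζ), integral_const]
    simp
  nlinarith

theorem cvar_subadditive
    {Ω : Type*} [MeasurableSpace Ω] (μ : Measure Ω) [IsProbabilityMeasure μ]
    (V W : Ω → ℝ) (hV : Integrable V μ) (hW : Integrable W μ)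
    (α : ℝ) (hα : α ∈ Set.Ioo (0 : ℝ) 1) :
    cvar μ α (fun ω => V ω + W ω) ≤ cvar μ α V + cvar μ α W := by
  obtain ⟨hα0, hα1⟩ := hα
  set c := (1 - α)⁻¹ with hc_def
  have h1α : 0 < 1 - α := by linarith
  have hc1 : 1 ≤ c := by
    rw [hc_def, le_inv_comm₀ one_pos h1α]
    linarith
  have hc0 : 0 ≤ c := by linarith
  have hbdd : BddBelow (Set.range fun ζ : ℝ =>
      ζ + c * ∫ ω, max ((V ω + W ω) - ζ) 0 ∂μ) := by
    refine ⟨∫ ω, (V ω + W ω) ∂μ, ?_⟩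
    rintro x ⟨ζ, rfl⟩
    exact cvar_aux_lb μ (hV.add hW) hc1 ζ
  refine le_ciInf_add_ciInf fun ζ₁ ζ₂ => ?_
  have key : cvar μ α (fun ω => V ω + W ω) ≤
      (ζ₁ + ζ₂) + c * ∫ ω, max ((V ω + W ω) - (ζ₁ + ζ₂)) 0 ∂μ :=
    ciInf_le hbdd (ζ₁ + ζ₂)
  refine key.trans ?_
  have hmono : ∫ ω, max ((V ω + W ω) - (ζ₁ + ζ₂)) 0 ∂μ ≤
      ∫ ω, (max (V ω - ζ₁) 0 + max (W ω - ζ₂) 0) ∂μ := by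
    refine integral_mono (cvar_aux_int μ (hV.add hW) _)
      ((cvar_aux_int μ hV ζ₁).add (cvar_aux_int μ hW ζ₂)) fun ω => ?_
    refine max_le ?_ (add_nonneg (le_max_right _ _) (le_max_right _ _))
    have : V ω + W ω - (ζ₁ + ζ₂) = (V ω - ζ₁) + (W ω - ζ₂) := by ring
    rw [this]
    exact add_le_add (le_max_left _ _) (le_max_left _ _)
  rw [integral_add (cvar_aux_int μ hV ζ₁) (cvar_aux_int μ hW ζ₂)] at hmono
  nlinarith [mul_le_mul_of_nonneg_left hmono hc0]
end

section
/- For a Gaussian random variable V ~ N(μ, σ²), the Rockafellar–Uryasev CVaR at level α ∈ (0,1) equals μ + σ·φ(Φ⁻¹(α))/(1-α), where φ and Φ are the standard normal pdf and cdf. -/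
open MeasureTheory ProbabilityTheory

noncomputable def stdNormalCDF : ℝ → ℝ := fun x =>
  ∫ t in Set.Iic x, Real.exp (-t ^ 2 / 2) / Real.sqrt (2 * Real.pi)

noncomputable def stdNormalQuantile (α : ℝ) : ℝ :=
  sInf {x : ℝ | α ≤ stdNormalCDF x}

noncomputable def stdNormalPDF (x : ℝ) : ℝ :=
  Real.exp (-x ^ 2 / 2) / Real.sqrt (2 * Real.pi)

open Real Set Filter Topology

lemma stdNormalPDF_pos (x : ℝ) : 0 < stdNormalPDF x := by
  unfold stdNormalPDF
  positivity

lemma stdNormalPDF_eq (x : ℝ) :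
    stdNormalPDF x = (Real.sqrt (2 * π))⁻¹ * Real.exp (-(1/2) * x ^ 2) := by
  unfold stdNormalPDF
  rw [div_eq_inv_mul]
  ring_nf

lemma integrable_stdNormalPDF : Integrable stdNormalPDF := by
  have h := (integrable_exp_neg_mul_sq (by norm_num : (0:ℝ) < 1/2)).const_mul
    (Real.sqrt (2 * π))⁻¹
  exact h.congr (by filter_upwards with x using (stdNormalPDF_eq x).symm)

lemma integrable_mul_stdNormalPDF : Integrable (fun x => x * stdNormalPDF x) := by
  have h := ((integrable_mul_exp_neg_mul_sq (by norm_num : (0:ℝ) < 1/2)).const_mul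
    (Real.sqrt (2 * π))⁻¹)
  refine h.congr (by filter_upwards with x; rw [stdNormalPDF_eq]; ring)

lemma integrable_abs_mul_stdNormalPDF : Integrable (fun x => |x| * stdNormalPDF x) := by
  refine integrable_mul_stdNormalPDF.abs.congr (by
    filter_upwards with x
    rw [abs_mul, abs_of_pos (stdNormalPDF_pos x)])

lemma stdNormalPDF_eq_gaussian : gaussianPDFReal 0 1 = stdNormalPDF := by
  funext x
  simp [gaussianPDFReal, stdNormalPDF, div_eq_mul_inv, mul_comm]

lemma integral_stdNormalPDF : ∫ x, stdNormalPDF x = 1 := by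
  rw [← stdNormalPDF_eq_gaussian]
  exact integral_gaussianPDFReal_eq_one 0 one_ne_zero

lemma hasDerivAt_neg_pdf (x : ℝ) :
    HasDerivAt (fun t => -stdNormalPDF t) (x * stdNormalPDF x) x := by
  have h1 : HasDerivAt (fun t : ℝ => -t ^ 2 / 2) (-x) x := by
    have := ((hasDerivAt_pow 2 x).neg).div_const 2
    simpa using this.congr_deriv (by ring)
  have h2 := (h1.exp).div_const (Real.sqrt (2 * π))
  have h3 := h2.neg
  refine h3.congr_deriv ?_
  unfold stdNormalPDF
  ring

lemma tendsto_pdf_atTop : Tendsto stdNormalPDF atTop (𝓝 0) := by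
  unfold stdNormalPDF
  rw [show (0:ℝ) = 0 / Real.sqrt (2*π) by simp]
  apply Tendsto.div_const
  apply Real.tendsto_exp_atBot.comp
  have : Tendsto (fun x : ℝ => x ^ 2 / 2) atTop atTop :=
    (tendsto_pow_atTop two_ne_zero).atTop_div_const (by norm_num)
  exact (tendsto_neg_atTop_atBot.comp this).congr (fun a => by simp only [Function.comp_apply]; ring)

lemma integral_Ioi_id_mul_pdf (z : ℝ) :
    ∫ t in Ioi z, t * stdNormalPDF t = stdNormalPDF z := by
  have h := integral_Ioi_of_hasDerivAt_of_tendsto' (f := fun t => -stdNormalPDF t)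
    (f' := fun t => t * stdNormalPDF t) (a := z) (m := 0)
    (fun x _ => hasDerivAt_neg_pdf x) ?_ ?_
  · simpa using h
  · exact integrable_mul_stdNormalPDF.integrableOn
  · simpa using tendsto_pdf_atTop.neg

lemma cdf_eq (x : ℝ) : stdNormalCDF x = ∫ t in Iic x, stdNormalPDF t := rfl

lemma measurable_stdNormalPDF : Measurable stdNormalPDF := by
  unfold stdNormalPDF; fun_prop

lemma integral_Iic_add_Ioi_pdf (z : ℝ) :
    stdNormalCDF z + ∫ t in Ioi z, stdNormalPDF t = 1 := by
  rw [cdf_eq, intervalIntegral.integral_Iic_add_Ioi integrable_stdNormalPDF.integrableOn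
    integrable_stdNormalPDF.integrableOn, integral_stdNormalPDF]

lemma integral_Ioi_pdf (z : ℝ) :
    ∫ t in Ioi z, stdNormalPDF t = 1 - stdNormalCDF z := by
  have := integral_Iic_add_Ioi_pdf z; linarith

lemma cdf_sub (x y : ℝ) :
    stdNormalCDF y - stdNormalCDF x = ∫ t in x..y, stdNormalPDF t := by
  rw [cdf_eq, cdf_eq]
  exact intervalIntegral.integral_Iic_sub_Iic integrable_stdNormalPDF.integrableOn
    integrable_stdNormalPDF.integrableOn

lemma cdf_strictMono : StrictMono stdNormalCDF := by
  intro x y hxy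
  have h : 0 < ∫ t in x..y, stdNormalPDF t := by
    apply intervalIntegral.intervalIntegral_pos_of_pos_on
      integrable_stdNormalPDF.intervalIntegrable
      (fun t _ => stdNormalPDF_pos t) hxy
  have := cdf_sub x y; linarith

lemma cdf_continuous : Continuous stdNormalCDF := by
  have h : stdNormalCDF = fun x => stdNormalCDF 0 + ∫ t in (0:ℝ)..x, stdNormalPDF t := by
    funext x
    have := cdf_sub 0 x; linarith
  rw [h]
  exact continuous_const.add (integrable_stdNormalPDF.continuous_primitive 0)

lemma cdf_tendsto_atTop : Tendsto stdNormalCDF atTop (𝓝 1) := by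
  have h := tendsto_setIntegral_of_monotone (μ := (volume : Measure ℝ))
    (s := fun x : ℝ => Iic x) (f := stdNormalPDF)
    (fun i => measurableSet_Iic) (fun a b hab => Iic_subset_Iic.2 hab)
    (by rw [iUnion_Iic]; exact integrable_stdNormalPDF.integrableOn)
  rw [iUnion_Iic] at h
  simp only [setIntegral_univ, integral_stdNormalPDF] at h
  exact h

lemma stdNormalPDF_neg (x : ℝ) : stdNormalPDF (-x) = stdNormalPDF x := by
  unfold stdNormalPDF; rw [neg_pow]; norm_num

lemma cdf_neg (x : ℝ) : stdNormalCDF (-x) = 1 - stdNormalCDF x := by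
  rw [cdf_eq, ← integral_Ioi_pdf]
  have h : ∫ t in Iic (-x), stdNormalPDF t = ∫ t in Iic (-x), stdNormalPDF (-t) := by
    refine setIntegral_congr_fun measurableSet_Iic (fun t _ => (stdNormalPDF_neg t).symm)
  rw [h, integral_comp_neg_Iic, neg_neg]

lemma cdf_tendsto_atBot : Tendsto stdNormalCDF atBot (𝓝 0) := by
  have h : stdNormalCDF = fun x => 1 - stdNormalCDF (-x) := by
    funext x
    have := cdf_neg (-x); rw [neg_neg] at this; linarith
  rw [h, show (0:ℝ) = 1 - 1 by norm_num]
  exact tendsto_const_nhds.sub (cdf_tendsto_atTop.comp tendsto_neg_atBot_atTop)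

lemma cdf_quantile {α : ℝ} (hα : α ∈ Set.Ioo (0:ℝ) 1) :
    stdNormalCDF (stdNormalQuantile α) = α := by
  obtain ⟨hα0, hα1⟩ := hα
  obtain ⟨a, ha⟩ : ∃ a, stdNormalCDF a < α :=
    (cdf_tendsto_atBot.eventually_lt_const hα0).exists
  obtain ⟨b, hb⟩ : ∃ b, α < stdNormalCDF b :=
    (cdf_tendsto_atTop.eventually_const_lt hα1).exists
  have hab : a ≤ b := le_of_lt (cdf_strictMono.lt_iff_lt.mp (ha.trans hb))
  obtain ⟨x₀, _, hx₀⟩ := intermediate_value_Icc hab cdf_continuous.continuousOn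
    ⟨le_of_lt ha, le_of_lt hb⟩
  have hset : {x : ℝ | α ≤ stdNormalCDF x} = Ici x₀ := by
    ext x
    simp only [mem_setOf_eq, mem_Ici, ← hx₀]
    exact ⟨fun h => (cdf_strictMono.le_iff_le).mp h, fun h => cdf_strictMono.le_iff_le.mpr h⟩
  rw [stdNormalQuantile, hset, csInf_Ici, hx₀]

lemma gaussian_map (m σ : ℝ) (hσ : 0 < σ) :
    gaussianReal m (Real.toNNReal (σ ^ 2))
      = (gaussianReal 0 1).map (fun t => σ * t + m) := by
  have h1 : (fun t : ℝ => σ * t + m) = (· + m) ∘ (σ * ·) := rfl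
  rw [h1, ← Measure.map_map (measurable_add_const m) (measurable_const_mul σ),
    gaussianReal_map_const_mul, gaussianReal_map_add_const]
  congr 1
  · ring
  · ext
    simp [Real.coe_toNNReal _ (sq_nonneg σ)]

lemma integral_gaussian_eq (m σ : ℝ) (hσ : 0 < σ) (g : ℝ → ℝ) (hg : Measurable g) :
    ∫ x, g x ∂(gaussianReal m (Real.toNNReal (σ ^ 2)))
      = ∫ t, g (σ * t + m) * stdNormalPDF t := by
  rw [gaussian_map m σ hσ,
    integral_map (by fun_prop) hg.aestronglyMeasurable,
    gaussianReal_of_var_ne_zero 0 one_ne_zero]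
  have hd : gaussianPDF 0 1 = fun x => ((Real.toNNReal (stdNormalPDF x) : NNReal) : ENNReal) := by
    funext x
    rw [gaussianPDF, stdNormalPDF_eq_gaussian, ENNReal.ofReal]
  rw [hd, integral_withDensity_eq_integral_smul
    (measurable_stdNormalPDF.real_toNNReal) (fun t => g (σ * t + m))]
  congr 1
  funext t
  rw [NNReal.smul_def, smul_eq_mul, Real.coe_toNNReal _ (stdNormalPDF_pos t).le, mul_comm]

lemma integrable_max_mul (z : ℝ) :
    Integrable (fun t => max (t - z) 0 * stdNormalPDF t) := by
  refine Integrable.mono'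
    (integrable_abs_mul_stdNormalPDF.add (integrable_stdNormalPDF.const_mul |z|))
    ?_ ?_
  · exact (((measurable_id.sub measurable_const).max measurable_const).mul
      measurable_stdNormalPDF).aestronglyMeasurable
  · filter_upwards with t
    rw [Real.norm_eq_abs, abs_mul, abs_of_pos (stdNormalPDF_pos t)]
    have h1 : |max (t - z) 0| ≤ |t| + |z| := by
      rw [abs_of_nonneg (le_max_right _ _)]
      rcases max_cases (t - z) 0 with ⟨h, _⟩ | ⟨h, _⟩ <;> rw [h]
      · calc t - z ≤ |t - z| := le_abs_self _
          _ ≤ |t| + |z| := abs_sub _ _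
      · positivity
    calc |max (t - z) 0| * stdNormalPDF t ≤ (|t| + |z|) * stdNormalPDF t :=
          mul_le_mul_of_nonneg_right h1 (stdNormalPDF_pos t).le
      _ = |t| * stdNormalPDF t + |z| * stdNormalPDF t := by ring

lemma integrable_indicator_mul (q : ℝ) :
    Integrable (fun t => (Ioi q).indicator (fun _ => (1:ℝ)) t * stdNormalPDF t) := by
  refine Integrable.mono' integrable_stdNormalPDF ?_ ?_
  · apply Measurable.aestronglyMeasurable
    exact ((measurable_const.indicator measurableSet_Ioi).mul measurable_stdNormalPDF)
  · filter_upwards with t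
    rw [Real.norm_eq_abs, abs_mul, abs_of_pos (stdNormalPDF_pos t)]
    by_cases h : t ∈ Ioi q <;>
      simp [indicator_of_mem, indicator_of_notMem, h, (stdNormalPDF_pos t).le]

lemma integral_indicator_mul (q : ℝ) :
    ∫ t, (Ioi q).indicator (fun _ => (1:ℝ)) t * stdNormalPDF t = 1 - stdNormalCDF q := by
  have h : (fun t => (Ioi q).indicator (fun _ => (1:ℝ)) t * stdNormalPDF t)
      = (Ioi q).indicator stdNormalPDF := by
    funext t
    by_cases ht : t ∈ Ioi q <;> simp [ht]
  rw [h, integral_indicator measurableSet_Ioi, integral_Ioi_pdf]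

lemma H_eval (q : ℝ) :
    ∫ t, max (t - q) 0 * stdNormalPDF t
      = stdNormalPDF q - q * (1 - stdNormalCDF q) := by
  have h : (fun t => max (t - q) 0 * stdNormalPDF t)
      = (Ioi q).indicator (fun t => (t - q) * stdNormalPDF t) := by
    funext t
    by_cases ht : t ∈ Ioi q
    · rw [indicator_of_mem ht]
      rw [max_eq_left (by simp only [mem_Ioi] at ht; linarith)]
    · rw [indicator_of_notMem ht, max_eq_right (by simp only [mem_Ioi, not_lt] at ht; linarith),
        zero_mul]
  rw [h, integral_indicator measurableSet_Ioi]
  have h2 : ∀ t : ℝ, (t - q) * stdNormalPDF t = t * stdNormalPDF t - q * stdNormalPDF t :=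
    fun t => by ring
  simp_rw [h2]
  rw [integral_sub (integrable_mul_stdNormalPDF.integrableOn)
    ((integrable_stdNormalPDF.const_mul q).integrableOn),
    integral_Ioi_id_mul_pdf, integral_const_mul, integral_Ioi_pdf]

lemma H_lower (z q : ℝ) :
    (∫ t, max (t - q) 0 * stdNormalPDF t) + (q - z) * (1 - stdNormalCDF q)
      ≤ ∫ t, max (t - z) 0 * stdNormalPDF t := by
  have key : ∀ t : ℝ,
      (max (t - q) 0 + (q - z) * (Ioi q).indicator (fun _ => (1:ℝ)) t) * stdNormalPDF t
        ≤ max (t - z) 0 * stdNormalPDF t := by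
    intro t
    refine mul_le_mul_of_nonneg_right ?_ (stdNormalPDF_pos t).le
    by_cases ht : t ∈ Ioi q
    · simp only [mem_Ioi] at ht
      rw [indicator_of_mem (by exact ht), max_eq_left (by linarith)]
      calc t - q + (q - z) * 1 = t - z := by ring
        _ ≤ max (t - z) 0 := le_max_left _ _
    · simp only [mem_Ioi, not_lt] at ht
      rw [indicator_of_notMem (by simpa using not_lt.mpr ht), max_eq_right (by linarith)]
      simpa using le_max_right (t - z) 0
  have hint : Integrable (fun t =>
      (max (t - q) 0 + (q - z) * (Ioi q).indicator (fun _ => (1:ℝ)) t) * stdNormalPDF t) := by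
    have := (integrable_max_mul q).add ((integrable_indicator_mul q).const_mul (q - z))
    refine this.congr (by filter_upwards with t; simp only [Pi.add_apply]; ring)
  have hmono := integral_mono hint (integrable_max_mul z) key
  have heq : ∫ t, (max (t - q) 0 + (q - z) * (Ioi q).indicator (fun _ => (1:ℝ)) t)
        * stdNormalPDF t
      = (∫ t, max (t - q) 0 * stdNormalPDF t) + (q - z) * (1 - stdNormalCDF q) := by
    have h1 : (fun t => (max (t - q) 0 + (q - z) * (Ioi q).indicator (fun _ => (1:ℝ)) t)
          * stdNormalPDF t)
        = fun t => max (t - q) 0 * stdNormalPDF t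
            + (q - z) * ((Ioi q).indicator (fun _ => (1:ℝ)) t * stdNormalPDF t) := by
      funext t; ring
    rw [h1, integral_add (integrable_max_mul q)
      (((integrable_indicator_mul q).const_mul (q - z)).congr
        (by filter_upwards with t; ring)),
      integral_const_mul, integral_indicator_mul]
  rw [heq] at hmono
  exact hmono

theorem gaussian_cvar_formula
    (m σ : ℝ) (hσ : 0 < σ) (α : ℝ) (hα : α ∈ Set.Ioo (0 : ℝ) 1) :
    (⨅ ζ : ℝ, (ζ + (1 - α)⁻¹ *
        ∫ x, max (x - ζ) 0 ∂(gaussianReal m (Real.toNNReal (σ ^ 2)))))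
      = m + σ * stdNormalPDF (stdNormalQuantile α) / (1 - α) := by
  obtain ⟨hα0, hα1⟩ := hα
  have h1α : 0 < 1 - α := by linarith
  set q := stdNormalQuantile α with hqdef
  have hΦq : stdNormalCDF q = α := cdf_quantile ⟨hα0, hα1⟩
  set C := m + σ * stdNormalPDF q / (1 - α) with hC
  have hmax : ∀ a : ℝ, max (σ * a) 0 = σ * max a 0 := by
    intro a
    rcases le_total a 0 with h | h
    · rw [max_eq_right (by nlinarith), max_eq_right h, mul_zero]
    · rw [max_eq_left (by positivity), max_eq_left h]
  have hG : ∀ ζ : ℝ, (∫ x, max (x - ζ) 0 ∂(gaussianReal m (Real.toNNReal (σ ^ 2))))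
      = σ * ∫ t, max (t - (ζ - m) / σ) 0 * stdNormalPDF t := by
    intro ζ
    rw [integral_gaussian_eq m σ hσ (fun x => max (x - ζ) 0)
      (by measurability), ← integral_const_mul]
    congr 1
    funext t
    have h1 : σ * t + m - ζ = σ * (t - (ζ - m) / σ) := by field_simp; ring
    rw [h1, hmax]
    ring
  have hHq : ∫ t, max (t - q) 0 * stdNormalPDF t = stdNormalPDF q - q * (1 - α) := by
    rw [H_eval, hΦq]
  have hlow : ∀ ζ : ℝ, C ≤ ζ + (1 - α)⁻¹ *
      ∫ x, max (x - ζ) 0 ∂(gaussianReal m (Real.toNNReal (σ ^ 2))) := by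
    intro ζ
    rw [hG ζ]
    set z := (ζ - m) / σ with hz
    have hζ : ζ = m + σ * z := by rw [hz]; field_simp; ring
    have hl := H_lower z q
    rw [hΦq, hHq] at hl
    have h2 : stdNormalPDF q - z * (1 - α) ≤ ∫ t, max (t - z) 0 * stdNormalPDF t := by
      nlinarith [hl]
    have h3 : (1 - α)⁻¹ * σ * (stdNormalPDF q - z * (1 - α))
        ≤ (1 - α)⁻¹ * σ * ∫ t, max (t - z) 0 * stdNormalPDF t :=
      mul_le_mul_of_nonneg_left h2 (by positivity)
    have he : (1 - α)⁻¹ * σ * (stdNormalPDF q - z * (1 - α))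
        = σ * stdNormalPDF q / (1 - α) - σ * z := by
      field_simp
    rw [hC, hζ]
    have he2 : (1 - α)⁻¹ * (σ * ∫ t, max (t - z) 0 * stdNormalPDF t)
        = (1 - α)⁻¹ * σ * ∫ t, max (t - z) 0 * stdNormalPDF t := by ring
    linarith [he ▸ h3, he2 ▸ le_refl ((1 - α)⁻¹ * (σ * ∫ t, max (t - z) 0 * stdNormalPDF t))]
  have hval : (m + σ * q) + (1 - α)⁻¹ *
      (∫ x, max (x - (m + σ * q)) 0 ∂(gaussianReal m (Real.toNNReal (σ ^ 2)))) = C := by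
    rw [hG]
    have h1 : (m + σ * q - m) / σ = q := by field_simp; ring
    rw [h1, hHq, hC]
    field_simp
    ring
  have hbdd : BddBelow (Set.range fun ζ : ℝ => ζ + (1 - α)⁻¹ *
      ∫ x, max (x - ζ) 0 ∂(gaussianReal m (Real.toNNReal (σ ^ 2)))) := by
    refine ⟨C, ?_⟩
    rintro x ⟨ζ, rfl⟩
    exact hlow ζ
  refine le_antisymm ?_ (le_ciInf hlow)
  exact (ciInf_le hbdd (m + σ * q)).trans_eq hval
end
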